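/- Let f: R^3 → R be measurable. Then for every v ∈ R^3, ∫_{R^3} |f(η)|/|η - v| dη ≤ C (1+|v|)^{-1} ( ∫_{R^3} (1+|η|)^4 |f(η)|^2 dη )^{1/2} for a constant C independent of v and f. -/

import Mathlib

open MeasureTheory

open Metric
open scoped ENNReal

local notation "E3" => EuclideanSpace ℝ (Fin 3)

lemma ball_kernel_lintegral_le {R : ℝ} (hR : 0 < R) :
    ∫⁻ x : E3 in ball 0 R, ENNReal.ofReal (‖x‖⁻¹ ^ 2)
      ≤ 8 * volume (ball (0:E3) 1) * ENNReal.ofReal R := by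
  set V := volume (ball (0:E3) 1) with hV
  set A : ℕ → Set E3 := fun n => ball 0 (R * 2⁻¹ ^ n) \ ball 0 (R * 2⁻¹ ^ (n+1)) with hA
  have hcover : ball (0:E3) R ⊆ {0} ∪ ⋃ n, A n := by
    intro x hx
    rcases eq_or_ne x 0 with rfl | hx0
    · exact Set.mem_union_left _ rfl
    refine Set.mem_union_right _ ?_
    have hxn : 0 < ‖x‖ := norm_pos_iff.2 hx0
    have hex : ∃ m : ℕ, R * 2⁻¹ ^ (m+1) ≤ ‖x‖ := by
      obtain ⟨m, hm⟩ := exists_pow_lt_of_lt_one (div_pos hxn hR) (by norm_num : (2:ℝ)⁻¹ < 1)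
      refine ⟨m, ?_⟩
      have h1 : (2:ℝ)⁻¹ ^ (m+1) ≤ 2⁻¹ ^ m :=
        pow_le_pow_of_le_one (by norm_num) (by norm_num) (Nat.le_succ m)
      have := (lt_div_iff₀' hR).mp hm
      nlinarith
    have hspec : R * 2⁻¹ ^ (Nat.find hex + 1) ≤ ‖x‖ := Nat.find_spec hex
    have hlt : ‖x‖ < R * 2⁻¹ ^ (Nat.find hex) := by
      rcases Nat.eq_zero_or_pos (Nat.find hex) with h0 | hpos
      · rw [h0]; simpa using mem_ball_zero_iff.mp hx
      · obtain ⟨k, hk⟩ := Nat.exists_eq_add_of_lt hpos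
        have hmin := Nat.find_min hex (m := k) (by omega)
        push_neg at hmin
        rw [hk]; simpa using hmin
    refine Set.mem_iUnion.2 ⟨Nat.find hex, ?_⟩
    exact ⟨mem_ball_zero_iff.2 hlt, fun h => absurd (mem_ball_zero_iff.mp h) (not_lt.2 hspec)⟩
  have hRn : ∀ n : ℕ, 0 < R * 2⁻¹ ^ n := fun n => by positivity
  have hterm : ∀ n : ℕ, ∫⁻ x : E3 in A n, ENNReal.ofReal (‖x‖⁻¹ ^ 2)
      ≤ ENNReal.ofReal (4 * R * 2⁻¹ ^ n) * V := by
    intro n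
    have hbound : ∀ x ∈ A n, ENNReal.ofReal (‖x‖⁻¹ ^ 2)
        ≤ ENNReal.ofReal ((R * 2⁻¹ ^ (n+1))⁻¹ ^ 2) := by
      intro x hx
      have h1 : R * 2⁻¹ ^ (n+1) ≤ ‖x‖ :=
        not_lt.mp (fun h => hx.2 (mem_ball_zero_iff.2 h))
      exact ENNReal.ofReal_le_ofReal <| by
        have := inv_anti₀ (hRn (n+1)) h1
        nlinarith [inv_nonneg.2 (norm_nonneg x)]
    calc ∫⁻ x : E3 in A n, ENNReal.ofReal (‖x‖⁻¹ ^ 2)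
        ≤ ∫⁻ _ in A n, ENNReal.ofReal ((R * 2⁻¹ ^ (n+1))⁻¹ ^ 2) :=
          setLIntegral_mono measurable_const hbound
      _ = ENNReal.ofReal ((R * 2⁻¹ ^ (n+1))⁻¹ ^ 2) * volume (A n) := setLIntegral_const _ _
      _ ≤ ENNReal.ofReal ((R * 2⁻¹ ^ (n+1))⁻¹ ^ 2)
            * (ENNReal.ofReal ((R * 2⁻¹ ^ n) ^ 3) * V) := by
          gcongr
          calc volume (A n) ≤ volume (ball (0:E3) (R * 2⁻¹ ^ n)) :=
                measure_mono Set.diff_subset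
            _ = ENNReal.ofReal ((R * 2⁻¹ ^ n) ^ 3) * V := by
                rw [Measure.addHaar_ball volume (0:E3) (hRn n).le, finrank_euclideanSpace_fin]
      _ = ENNReal.ofReal (4 * R * 2⁻¹ ^ n) * V := by
          rw [← mul_assoc, ← ENNReal.ofReal_mul (by positivity)]
          congr 2
          have h2 : ((2:ℝ)⁻¹) ^ n ≠ 0 := by positivity
          field_simp
          ring
  calc ∫⁻ x : E3 in ball 0 R, ENNReal.ofReal (‖x‖⁻¹ ^ 2)
      ≤ ∫⁻ x : E3 in {0} ∪ ⋃ n, A n, ENNReal.ofReal (‖x‖⁻¹ ^ 2) := lintegral_mono_set hcover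
    _ ≤ (∫⁻ x : E3 in {0}, ENNReal.ofReal (‖x‖⁻¹ ^ 2))
          + ∫⁻ x : E3 in ⋃ n, A n, ENNReal.ofReal (‖x‖⁻¹ ^ 2) := lintegral_union_le _ _ _
    _ ≤ 0 + ∑' n, ∫⁻ x : E3 in A n, ENNReal.ofReal (‖x‖⁻¹ ^ 2) := by
        gcongr
        · rw [Measure.restrict_eq_zero.mpr (measure_singleton 0), lintegral_zero_measure]
        · exact lintegral_iUnion_le _ _
    _ ≤ ∑' n, ENNReal.ofReal (4 * R * 2⁻¹ ^ n) * V := by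
        rw [zero_add]; exact ENNReal.tsum_le_tsum hterm
    _ = 8 * V * ENNReal.ofReal R := by
        have : ∀ n : ℕ, ENNReal.ofReal (4 * R * 2⁻¹ ^ n) * V
            = (ENNReal.ofReal (4 * R) * V) * (2⁻¹ : ℝ≥0∞) ^ n := by
          intro n
          rw [ENNReal.ofReal_mul (by positivity), ENNReal.ofReal_pow (by norm_num)]
          have : ENNReal.ofReal (2:ℝ)⁻¹ = (2:ℝ≥0∞)⁻¹ := by
            rw [ENNReal.ofReal_inv_of_pos (by norm_num)]; norm_num
          rw [this]; ring
        simp_rw [this]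
        rw [ENNReal.tsum_mul_left, ENNReal.tsum_geometric, ENNReal.one_sub_inv_two, inv_inv,
          ENNReal.ofReal_mul (by norm_num)]
        norm_num
        ring

lemma kernel_lintegral_bound : ∃ K : ℝ≥0∞, K ≠ ⊤ ∧ ∀ v : E3,
    ∫⁻ η : E3, ENNReal.ofReal (((1 + ‖η‖)⁻¹ ^ 2 * ‖η - v‖⁻¹) ^ 2)
      ≤ K * ENNReal.ofReal ((1 + ‖v‖)⁻¹) ^ 2 := by
  set V := volume (ball (0:E3) 1) with hV
  set I4 := ∫⁻ x : E3, ENNReal.ofReal ((1 + ‖x‖) ^ (-(4:ℝ))) with hI4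
  have hI4fin : I4 < ⊤ :=
    finite_integral_one_add_norm (by rw [finrank_euclideanSpace_fin]; norm_num)
  have hVfin : V < ⊤ := measure_ball_lt_top
  refine ⟨64 * V + 4 * I4, by finiteness, fun v => ?_⟩
  set a := 1 + ‖v‖ with ha
  have ha1 : (1:ℝ) ≤ a := by simp [ha, norm_nonneg]
  have ha0 : (0:ℝ) < a := lt_of_lt_of_le zero_lt_one ha1
  set R := a / 2 with hRdef
  have hR : 0 < R := by positivity
  -- rewrite the integrand of I4
  have hI4' : I4 = ∫⁻ x : E3, ENNReal.ofReal ((1 + ‖x‖)⁻¹ ^ 4) := by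
    rw [hI4]
    congr 1
    funext x
    congr 1
    rw [Real.rpow_neg (by positivity),
      show ((4:ℝ)) = ((4:ℕ):ℝ) by norm_num, Real.rpow_natCast, ← inv_pow]
  -- pointwise bound
  have hpt : ∀ η : E3, ENNReal.ofReal (((1 + ‖η‖)⁻¹ ^ 2 * ‖η - v‖⁻¹) ^ 2)
      ≤ (ball v R).indicator
          (fun η => ENNReal.ofReal (16 * a⁻¹ ^ 4 * ‖η - v‖⁻¹ ^ 2)) η
        + ENNReal.ofReal (4 * a⁻¹ ^ 2 * (1 + ‖η‖)⁻¹ ^ 4) := by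
    intro η
    have heq : ((1 + ‖η‖)⁻¹ ^ 2 * ‖η - v‖⁻¹) ^ 2 = (1 + ‖η‖)⁻¹ ^ 4 * ‖η - v‖⁻¹ ^ 2 := by ring
    rw [heq]
    by_cases hη : η ∈ ball v R
    · rw [Set.indicator_of_mem hη]
      refine le_trans ?_ le_self_add
      apply ENNReal.ofReal_le_ofReal
      have hd : ‖η - v‖ < R := by rwa [mem_ball_iff_norm] at hη
      have h1 : a / 2 ≤ 1 + ‖η‖ := by
        have := norm_sub_norm_le η v
        rw [ha, hRdef] at *
        linarith [abs_le.mp (abs_norm_sub_norm_le η v)]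
      have h2 : (1 + ‖η‖)⁻¹ ≤ 2 * a⁻¹ := by
        rw [← one_div, ← one_div a]
        calc (1:ℝ) / (1 + ‖η‖) ≤ 1 / (a / 2) := by
              apply one_div_le_one_div_of_le (by positivity) h1
          _ = 2 * (1 / a) := by field_simp
      have h3 : (1 + ‖η‖)⁻¹ ^ 4 ≤ 16 * a⁻¹ ^ 4 := by
        calc (1 + ‖η‖)⁻¹ ^ 4 ≤ (2 * a⁻¹) ^ 4 := by
              apply pow_le_pow_left₀ (by positivity) h2
          _ = 16 * a⁻¹ ^ 4 := by ring
      exact mul_le_mul_of_nonneg_right h3 (by positivity)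
    · rw [Set.indicator_of_notMem hη, zero_add]
      apply ENNReal.ofReal_le_ofReal
      have hd : R ≤ ‖η - v‖ := by
        rw [mem_ball_iff_norm, not_lt] at hη
        exact hη
      have h2 : ‖η - v‖⁻¹ ≤ 2 * a⁻¹ := by
        rw [← one_div, ← one_div a]
        calc (1:ℝ) / ‖η - v‖ ≤ 1 / (a / 2) :=
              one_div_le_one_div_of_le (by positivity) (by rwa [← hRdef])
          _ = 2 * (1 / a) := by field_simp
      have h3 : ‖η - v‖⁻¹ ^ 2 ≤ 4 * a⁻¹ ^ 2 := by
        calc ‖η - v‖⁻¹ ^ 2 ≤ (2 * a⁻¹) ^ 2 := by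
              apply pow_le_pow_left₀ (by positivity) h2
          _ = 4 * a⁻¹ ^ 2 := by ring
      calc (1 + ‖η‖)⁻¹ ^ 4 * ‖η - v‖⁻¹ ^ 2 ≤ (1 + ‖η‖)⁻¹ ^ 4 * (4 * a⁻¹ ^ 2) :=
            mul_le_mul_of_nonneg_left h3 (by positivity)
        _ = 4 * a⁻¹ ^ 2 * (1 + ‖η‖)⁻¹ ^ 4 := by ring
  -- integrate
  have hmeas1 : Measurable fun η : E3 => ENNReal.ofReal (16 * a⁻¹ ^ 4 * ‖η - v‖⁻¹ ^ 2) := by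
    apply Measurable.ennreal_ofReal
    exact (measurable_const.mul ((((measurable_id.sub_const v).norm).inv).pow_const 2))
  have hmeasind : Measurable ((ball v R).indicator
      (fun η : E3 => ENNReal.ofReal (16 * a⁻¹ ^ 4 * ‖η - v‖⁻¹ ^ 2))) :=
    hmeas1.indicator measurableSet_ball
  have hball : ∫⁻ η : E3, (ball v R).indicator
      (fun η => ENNReal.ofReal (16 * a⁻¹ ^ 4 * ‖η - v‖⁻¹ ^ 2)) η
      ≤ 64 * V * ENNReal.ofReal ((1 + ‖v‖)⁻¹) ^ 2 := by
    have step1 : ∀ η : E3, (ball v R).indicator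
        (fun η => ENNReal.ofReal (16 * a⁻¹ ^ 4 * ‖η - v‖⁻¹ ^ 2)) η
        = ENNReal.ofReal (16 * a⁻¹ ^ 4)
          * (ball (0:E3) R).indicator (fun x => ENNReal.ofReal (‖x‖⁻¹ ^ 2)) (η - v) := by
      intro η
      have hmem : η ∈ ball v R ↔ η - v ∈ ball (0:E3) R := by
        rw [mem_ball_iff_norm, mem_ball_zero_iff]
      by_cases hη : η ∈ ball v R
      · rw [Set.indicator_of_mem hη, Set.indicator_of_mem (hmem.mp hη),
          ENNReal.ofReal_mul (by positivity)]
      · rw [Set.indicator_of_notMem hη, Set.indicator_of_notMem (fun h => hη (hmem.mpr h)),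
          mul_zero]
    simp_rw [step1]
    have hf' : Measurable fun η : E3 =>
        (ball (0:E3) R).indicator (fun x => ENNReal.ofReal (‖x‖⁻¹ ^ 2)) (η - v) := by
      exact ((measurable_norm.inv.pow_const 2).ennreal_ofReal.indicator
        measurableSet_ball).comp (measurable_id.sub_const v)
    rw [lintegral_const_mul _ hf']
    rw [lintegral_sub_right_eq_self
        ((ball (0:E3) R).indicator (fun x => ENNReal.ofReal (‖x‖⁻¹ ^ 2))) v]
    rw [lintegral_indicator measurableSet_ball]
    calc ENNReal.ofReal (16 * a⁻¹ ^ 4) * ∫⁻ x : E3 in ball 0 R, ENNReal.ofReal (‖x‖⁻¹ ^ 2)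
        ≤ ENNReal.ofReal (16 * a⁻¹ ^ 4) * (8 * V * ENNReal.ofReal R) := by
          gcongr
          exact ball_kernel_lintegral_le hR
      _ = 8 * V * (ENNReal.ofReal (16 * a⁻¹ ^ 4) * ENNReal.ofReal (a / 2)) := by ring
      _ = 8 * V * ENNReal.ofReal (8 * (a⁻¹ ^ 2 * a⁻¹)) := by
          have ha' : a ≠ 0 := ne_of_gt ha0
          rw [← ENNReal.ofReal_mul (by positivity),
            show 16 * a⁻¹ ^ 4 * (a / 2) = 8 * (a⁻¹ ^ 2 * a⁻¹) from by field_simp; ring]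
      _ ≤ 64 * V * ENNReal.ofReal ((1 + ‖v‖)⁻¹) ^ 2 := by
          rw [← ha, ← ENNReal.ofReal_pow (by positivity)]
          have hia : a⁻¹ ≤ 1 := by
            rw [← one_div]; exact (div_le_one ha0).mpr ha1
          calc 8 * V * ENNReal.ofReal (8 * (a⁻¹ ^ 2 * a⁻¹))
              ≤ 8 * V * ENNReal.ofReal (8 * (a⁻¹ ^ 2 * 1)) := by
                gcongr
            _ = 64 * V * ENNReal.ofReal (a⁻¹ ^ 2) := by
                rw [mul_one, ENNReal.ofReal_mul (by norm_num), ENNReal.ofReal_ofNat]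
                ring
  have htail : ∫⁻ η : E3, ENNReal.ofReal (4 * a⁻¹ ^ 2 * (1 + ‖η‖)⁻¹ ^ 4)
      ≤ 4 * I4 * ENNReal.ofReal ((1 + ‖v‖)⁻¹) ^ 2 := by
    have : ∀ η : E3, ENNReal.ofReal (4 * a⁻¹ ^ 2 * (1 + ‖η‖)⁻¹ ^ 4)
        = ENNReal.ofReal (4 * a⁻¹ ^ 2) * ENNReal.ofReal ((1 + ‖η‖)⁻¹ ^ 4) := fun η =>
      ENNReal.ofReal_mul (by positivity)
    simp_rw [this]
    rw [lintegral_const_mul _ (by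
      exact ((measurable_const.add measurable_norm).inv.pow_const 4).ennreal_ofReal)]
    rw [← hI4']
    rw [ENNReal.ofReal_mul (by norm_num), ENNReal.ofReal_pow (by positivity),
      ENNReal.ofReal_ofNat, ← ha]
    ring_nf
    exact le_refl _
  calc ∫⁻ η : E3, ENNReal.ofReal (((1 + ‖η‖)⁻¹ ^ 2 * ‖η - v‖⁻¹) ^ 2)
      ≤ ∫⁻ η : E3, ((ball v R).indicator
          (fun η => ENNReal.ofReal (16 * a⁻¹ ^ 4 * ‖η - v‖⁻¹ ^ 2)) η
        + ENNReal.ofReal (4 * a⁻¹ ^ 2 * (1 + ‖η‖)⁻¹ ^ 4)) := lintegral_mono hpt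
    _ = (∫⁻ η : E3, (ball v R).indicator
          (fun η => ENNReal.ofReal (16 * a⁻¹ ^ 4 * ‖η - v‖⁻¹ ^ 2)) η)
        + ∫⁻ η : E3, ENNReal.ofReal (4 * a⁻¹ ^ 2 * (1 + ‖η‖)⁻¹ ^ 4) :=
        lintegral_add_left hmeasind _
    _ ≤ 64 * V * ENNReal.ofReal ((1 + ‖v‖)⁻¹) ^ 2
        + 4 * I4 * ENNReal.ofReal ((1 + ‖v‖)⁻¹) ^ 2 := add_le_add hball htail
    _ = (64 * V + 4 * I4) * ENNReal.ofReal ((1 + ‖v‖)⁻¹) ^ 2 := by ring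
/-- Cauchy–Schwarz estimate: for measurable `f` in the weighted `L²` space,
`∫ |f(η)|/|η-v| dη ≤ C (1+|v|)⁻¹ (∫ (1+|η|)⁴ |f(η)|² dη)^{1/2}` uniformly in `v`. -/
theorem weighted_cauchy_schwarz_bound :
    ∃ C > 0, ∀ f : EuclideanSpace ℝ (Fin 3) → ℝ, Measurable f →
      Integrable (fun η : EuclideanSpace ℝ (Fin 3) => (1 + ‖η‖) ^ 4 * |f η| ^ 2) →
      ∀ v : EuclideanSpace ℝ (Fin 3),
        ∫ η : EuclideanSpace ℝ (Fin 3), |f η| / ‖η - v‖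
          ≤ C * (1 + ‖v‖)⁻¹ *
            Real.sqrt (∫ η : EuclideanSpace ℝ (Fin 3), (1 + ‖η‖) ^ 4 * |f η| ^ 2) := by
  obtain ⟨K, hKtop, hK⟩ := kernel_lintegral_bound
  set C := (K ^ ((1:ℝ)/2)).toReal + 1 with hC
  have hC0 : 0 < C := by positivity
  refine ⟨C, hC0, fun f hf hint v => ?_⟩
  set W := ∫ η : E3, (1 + ‖η‖) ^ 4 * |f η| ^ 2 with hW
  have hWnn : 0 ≤ W := integral_nonneg fun η => by positivity
  have ha0 : (0:ℝ) < 1 + ‖v‖ := by positivity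
  have hmeas : Measurable fun η : E3 => |f η| / ‖η - v‖ :=
    hf.abs.div (measurable_id.sub_const v).norm
  rw [integral_eq_lintegral_of_nonneg_ae
      (Filter.Eventually.of_forall fun η => by positivity) hmeas.aestronglyMeasurable]
  apply ENNReal.toReal_le_of_le_ofReal (by positivity)
  -- split the integrand as a product
  set Φ : E3 → ℝ≥0∞ := fun η => ENNReal.ofReal ((1 + ‖η‖)⁻¹ ^ 2 * ‖η - v‖⁻¹) with hΦ
  set Ψ : E3 → ℝ≥0∞ := fun η => ENNReal.ofReal ((1 + ‖η‖) ^ 2 * |f η|) with hΨ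
  have hsplit : ∀ η : E3, ENNReal.ofReal (|f η| / ‖η - v‖) = (Φ * Ψ) η := by
    intro η
    have hx : (1:ℝ) + ‖η‖ ≠ 0 := by positivity
    have hxx : (1 + ‖η‖)⁻¹ ^ 2 * (1 + ‖η‖) ^ 2 = 1 := by
      rw [inv_pow]; exact inv_mul_cancel₀ (pow_ne_zero 2 hx)
    have : |f η| / ‖η - v‖ = ((1 + ‖η‖)⁻¹ ^ 2 * ‖η - v‖⁻¹) * ((1 + ‖η‖) ^ 2 * |f η|) := by
      rw [div_eq_mul_inv,
        show ((1 + ‖η‖)⁻¹ ^ 2 * ‖η - v‖⁻¹) * ((1 + ‖η‖) ^ 2 * |f η|)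
          = ((1 + ‖η‖)⁻¹ ^ 2 * (1 + ‖η‖) ^ 2) * (|f η| * ‖η - v‖⁻¹) from by ring, hxx, one_mul]
    rw [this, Pi.mul_apply, hΦ, hΨ, ENNReal.ofReal_mul (by positivity)]
  have hΦm : AEMeasurable Φ volume :=
    (((((measurable_const.add measurable_norm).inv.pow_const 2)).mul
      ((measurable_id.sub_const v).norm.inv)).ennreal_ofReal).aemeasurable
  have hΨm : AEMeasurable Ψ volume :=
    ((((measurable_const.add measurable_norm).pow_const 2).mul hf.abs).ennreal_ofReal).aemeasurable
  have hpq : (2:ℝ).HolderConjugate 2 := Real.HolderConjugate.two_two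
  have holder := ENNReal.lintegral_mul_le_Lp_mul_Lq volume hpq hΦm hΨm
  -- the Φ factor
  have hΦ2 : ∀ η : E3, Φ η ^ (2:ℝ)
      = ENNReal.ofReal (((1 + ‖η‖)⁻¹ ^ 2 * ‖η - v‖⁻¹) ^ 2) := by
    intro η
    simp only [hΦ]
    rw [ENNReal.ofReal_rpow_of_nonneg (by positivity) (by norm_num : (0:ℝ) ≤ 2),
      Real.rpow_two]
  have hΦint : (∫⁻ η : E3, Φ η ^ (2:ℝ)) ^ ((1:ℝ)/2)
      ≤ K ^ ((1:ℝ)/2) * ENNReal.ofReal ((1 + ‖v‖)⁻¹) := by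
    calc (∫⁻ η : E3, Φ η ^ (2:ℝ)) ^ ((1:ℝ)/2)
        ≤ (K * ENNReal.ofReal ((1 + ‖v‖)⁻¹) ^ 2) ^ ((1:ℝ)/2) := by
          apply ENNReal.rpow_le_rpow _ (by norm_num)
          simp_rw [hΦ2]
          exact hK v
      _ = K ^ ((1:ℝ)/2) * ENNReal.ofReal ((1 + ‖v‖)⁻¹) := by
          rw [ENNReal.mul_rpow_of_nonneg _ _ (by norm_num)]
          congr 1
          rw [← ENNReal.rpow_natCast (ENNReal.ofReal ((1 + ‖v‖)⁻¹)) 2, ← ENNReal.rpow_mul]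
          norm_num
  -- the Ψ factor
  have hΨ2 : ∀ η : E3, Ψ η ^ (2:ℝ) = ENNReal.ofReal ((1 + ‖η‖) ^ 4 * |f η| ^ 2) := by
    intro η
    simp only [hΨ]
    rw [ENNReal.ofReal_rpow_of_nonneg (by positivity) (by norm_num : (0:ℝ) ≤ 2),
      Real.rpow_two]
    congr 1
    ring
  have hΨint : (∫⁻ η : E3, Ψ η ^ (2:ℝ)) ^ ((1:ℝ)/2) = ENNReal.ofReal (Real.sqrt W) := by
    simp_rw [hΨ2]
    rw [← ofReal_integral_eq_lintegral_ofReal hint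
        (Filter.Eventually.of_forall fun η => by positivity), ← hW,
      ENNReal.ofReal_rpow_of_nonneg hWnn (by norm_num : (0:ℝ) ≤ 1/2), Real.sqrt_eq_rpow]
  -- conclude
  calc ∫⁻ η : E3, ENNReal.ofReal (|f η| / ‖η - v‖)
      = ∫⁻ η : E3, (Φ * Ψ) η := by simp_rw [hsplit]
    _ ≤ (∫⁻ η : E3, Φ η ^ (2:ℝ)) ^ ((1:ℝ)/2) * (∫⁻ η : E3, Ψ η ^ (2:ℝ)) ^ ((1:ℝ)/2) := holder
    _ ≤ (K ^ ((1:ℝ)/2) * ENNReal.ofReal ((1 + ‖v‖)⁻¹)) * ENNReal.ofReal (Real.sqrt W) := by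
        rw [hΨint]
        exact mul_le_mul_left hΦint _
    _ ≤ (ENNReal.ofReal C * ENNReal.ofReal ((1 + ‖v‖)⁻¹)) * ENNReal.ofReal (Real.sqrt W) := by
        gcongr
        have hfin : K ^ ((1:ℝ)/2) ≠ ⊤ := by
          exact ENNReal.rpow_ne_top_of_nonneg (by norm_num) hKtop
        rw [← ENNReal.ofReal_toReal hfin]
        exact ENNReal.ofReal_le_ofReal (by rw [hC]; linarith)
    _ = ENNReal.ofReal (C * (1 + ‖v‖)⁻¹ * Real.sqrt W) := by
        rw [ENNReal.ofReal_mul (by positivity), ENNReal.ofReal_mul hC0.le]
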